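/- Let A be a skew-symmetric matrix indexed by an ordered set V of even size 2n, partitioned into disjoint subsets A₀ and B each of size n. Then Pf(V) = Pf(A₀, B) − ∑_{X ⊊ B} (−1)^{Σ(B\X, V)} · Pf(A₀ ∪ X) · Pf(B \ X), where Pf(A₀, B) denotes the signed bipartite sum: up to the appropriate sign, the determinant of the n×n matrix with entries A[a_i, b_j] for a_i ∈ A₀, b_j ∈ B. -/
import Mathlib


open Finset

/-- An (ordered) matching on `Fin n`: a set of arcs `(i,j)` with `i < j`,
pairwise vertex-disjoint. -/
def IsMatching {n : ℕ} (μ : Finset (Fin n × Fin n)) : Prop :=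
  (∀ p ∈ μ, p.1 < p.2) ∧
    ∀ p ∈ μ, ∀ q ∈ μ, p ≠ q → ({p.1, p.2} ∩ {q.1, q.2} : Finset (Fin n)) = ∅

/-- The set of vertices covered by a matching. -/
def cover {n : ℕ} (μ : Finset (Fin n × Fin n)) : Finset (Fin n) :=
  μ.biUnion fun p => {p.1, p.2}

/-- The number of crossings of a matching: pairs of arcs `{a,c}`, `{b,d}` with
`a < b < c < d`. -/
def crossings {n : ℕ} (μ : Finset (Fin n × Fin n)) : ℕ :=
  ((μ ×ˢ μ).filter fun pq => pq.1.1 < pq.2.1 ∧ pq.2.1 < pq.1.2 ∧ pq.1.2 < pq.2.2).card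

open scoped Classical in
/-- The Pfaffian of the principal submatrix of a skew-symmetric matrix `A`
indexed by the subset `S` (with the inherited order), defined as the signed sum
over perfect matchings of `S`.  `mpf A ∅ = 1` and `mpf A S = 0` for `|S|` odd. -/
noncomputable def mpf {n : ℕ} {R : Type*} [CommRing R]
    (A : Matrix (Fin n) (Fin n) R) (S : Finset (Fin n)) : R :=
  ∑ μ ∈ Finset.univ.filter
      (fun μ : Finset (Fin n × Fin n) => IsMatching μ ∧ cover μ = S),
    (-1 : R) ^ crossings μ * ∏ p ∈ μ, A p.1 p.2

/-- Symmetric difference of finite sets. -/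
def sd {n : ℕ} (X Y : Finset (Fin n)) : Finset (Fin n) := (X ∪ Y) \ (X ∩ Y)

/-- `posSum M Y = Σ(Y,M)`: the sum over `y ∈ Y` of the (1-based) position of `y`
in the increasing enumeration of `M`. -/
def posSum {n : ℕ} (M Y : Finset (Fin n)) : ℕ :=
  ∑ y ∈ Y, (M.filter fun z => z ≤ y).card

/-- The semi-bipartite modification of `A` with respect to `B`: all entries with
both indices in `B` are set to zero.  Its Pfaffian is `Pf(A₀, B)`. -/
def semiBip {n : ℕ} {R : Type*} [CommRing R] [DecidableEq (Fin n)]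
    (A : Matrix (Fin n) (Fin n) R) (B : Finset (Fin n)) : Matrix (Fin n) (Fin n) R :=
  Matrix.of fun i j => if i ∈ B ∧ j ∈ B then 0 else A i j

open scoped Classical

variable {n : ℕ}

abbrev cp {n : ℕ} (p q : Fin n × Fin n) : Prop := p.1 < q.1 ∧ q.1 < p.2 ∧ p.2 < q.2

lemma mem_cover {μ : Finset (Fin n × Fin n)} {v : Fin n} :
    v ∈ cover μ ↔ ∃ p ∈ μ, v = p.1 ∨ v = p.2 := by
  simp [cover, mem_biUnion, mem_insert, mem_singleton]

lemma cover_empty : cover (∅ : Finset (Fin n × Fin n)) = ∅ := rfl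

lemma cover_insert (a : Fin n × Fin n) (μ : Finset (Fin n × Fin n)) :
    cover (insert a μ) = insert a.1 (insert a.2 (cover μ)) := by
  ext v
  simp only [mem_cover, mem_insert]
  constructor
  · rintro ⟨p, hp, hv⟩
    rcases hp with rfl | hp'
    · tauto
    · exact Or.inr (Or.inr ⟨p, hp', hv⟩)
  · rintro (rfl | rfl | ⟨p, hp, hv⟩)
    · exact ⟨a, Or.inl rfl, Or.inl rfl⟩
    · exact ⟨a, Or.inl rfl, Or.inr rfl⟩
    · exact ⟨p, Or.inr hp, hv⟩

lemma cover_eq_empty {μ : Finset (Fin n × Fin n)} (h : cover μ = ∅) : μ = ∅ := by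
  rcases Finset.eq_empty_or_nonempty μ with h' | ⟨p, hp⟩
  · exact h'
  · exact absurd h (by
      intro hc
      have : p.1 ∈ cover μ := mem_cover.2 ⟨p, hp, Or.inl rfl⟩
      simp [hc] at this)

lemma matching_empty : IsMatching (∅ : Finset (Fin n × Fin n)) := by
  constructor <;> intro p hp <;> simp at hp

lemma crossings_empty : crossings (∅ : Finset (Fin n × Fin n)) = 0 := rfl

lemma matching_subset {μ' μ : Finset (Fin n × Fin n)} (hs : μ' ⊆ μ) (h : IsMatching μ) :
    IsMatching μ' :=
  ⟨fun p hp => h.1 p (hs hp), fun p hp q hq hne => h.2 p (hs hp) q (hs hq) hne⟩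

lemma matching_ne {μ : Finset (Fin n × Fin n)} (h : IsMatching μ) {p q : Fin n × Fin n}
    (hp : p ∈ μ) (hq : q ∈ μ) (hne : p ≠ q) :
    p.1 ≠ q.1 ∧ p.1 ≠ q.2 ∧ p.2 ≠ q.1 ∧ p.2 ≠ q.2 := by
  have := h.2 p hp q hq hne
  have h1 : ∀ x : Fin n, x ∈ ({p.1, p.2} : Finset (Fin n)) → x ∈ ({q.1, q.2} : Finset (Fin n)) → False := by
    intro x hx hy
    have hm : x ∈ ({p.1, p.2} ∩ {q.1, q.2} : Finset (Fin n)) := mem_inter.2 ⟨hx, hy⟩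
    rw [this] at hm
    exact notMem_empty x hm
  refine ⟨?_, ?_, ?_, ?_⟩ <;> intro he <;>
    [exact h1 p.1 (by simp) (by simp [he]); exact h1 p.1 (by simp) (by simp [he]);
     exact h1 p.2 (by simp) (by simp [he]); exact h1 p.2 (by simp) (by simp [he])]

lemma matching_insert {a : Fin n × Fin n} {μ : Finset (Fin n × Fin n)} (h : IsMatching μ)
    (h1 : a.1 < a.2) (h2 : a.1 ∉ cover μ) (h3 : a.2 ∉ cover μ) :
    IsMatching (insert a μ) := by
  constructor
  · intro p hp
    rcases mem_insert.1 hp with rfl | hp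
    · exact h1
    · exact h.1 p hp
  · intro p hp q hq hne
    have key : ∀ r ∈ μ, ({a.1, a.2} ∩ ({r.1, r.2} : Finset (Fin n))) = ∅ := by
      intro r hr
      ext x
      simp only [mem_inter, mem_insert, mem_singleton, notMem_empty, iff_false, not_and]
      rintro (rfl | rfl) he <;> rcases he with he | he <;>
        [exact h2 (mem_cover.2 ⟨r, hr, Or.inl he⟩); exact h2 (mem_cover.2 ⟨r, hr, Or.inr he⟩);
         exact h3 (mem_cover.2 ⟨r, hr, Or.inl he⟩); exact h3 (mem_cover.2 ⟨r, hr, Or.inr he⟩)]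
    rcases mem_insert.1 hp with rfl | hp' <;> rcases mem_insert.1 hq with rfl | hq'
    · exact absurd rfl hne
    · exact key q hq'
    · rw [inter_comm]; exact key p hp'
    · exact h.2 p hp' q hq' hne

lemma cover_erase {a : Fin n × Fin n} {μ : Finset (Fin n × Fin n)} (h : IsMatching μ)
    (ha : a ∈ μ) : cover (μ.erase a) = cover μ \ {a.1, a.2} := by
  ext v
  simp only [mem_cover, mem_sdiff, mem_erase, mem_insert, mem_singleton]
  constructor
  · rintro ⟨p, ⟨hpa, hp⟩, hv⟩
    refine ⟨⟨p, hp, hv⟩, ?_⟩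
    have := matching_ne h hp ha hpa
    rintro (he | he) <;> rcases hv with rfl | rfl <;> [exact this.1 he; exact this.2.2.1 he; exact this.2.1 he; exact this.2.2.2 he]
  · rintro ⟨⟨p, hp, hv⟩, hva⟩
    refine ⟨p, ⟨?_, hp⟩, hv⟩
    rintro rfl
    rcases hv with rfl | rfl <;> [exact hva (Or.inl rfl); exact hva (Or.inr rfl)]

noncomputable def crossNum {n : ℕ} (a : Fin n × Fin n) (μ : Finset (Fin n × Fin n)) : ℕ :=
  (μ.filter (fun q => cp a q ∨ cp q a)).card

lemma crossings_as_sum (μ : Finset (Fin n × Fin n)) :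
    crossings μ = ∑ p ∈ μ, ∑ q ∈ μ, if cp p q then 1 else 0 := by
  rw [crossings, Finset.card_filter, Finset.sum_product]

lemma crossings_insert {a : Fin n × Fin n} {μ : Finset (Fin n × Fin n)} (ha : a ∉ μ) :
    crossings (insert a μ) = crossings μ + crossNum a μ := by
  have hcpaa : ¬ cp a a := fun h => lt_irrefl _ h.1
  rw [crossings_as_sum, crossings_as_sum, Finset.sum_insert ha]
  rw [Finset.sum_insert ha, if_neg hcpaa]
  have : ∀ p ∈ μ, (∑ q ∈ insert a μ, if cp p q then 1 else 0)
      = (if cp p a then 1 else 0) + ∑ q ∈ μ, if cp p q then 1 else 0 := by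
    intro p _; rw [Finset.sum_insert ha]
  rw [Finset.sum_congr rfl this, Finset.sum_add_distrib]
  have hsum : (∑ q ∈ μ, if cp a q then 1 else 0) + ∑ p ∈ μ, (if cp p a then 1 else 0)
      = crossNum a μ := by
    rw [crossNum, Finset.card_filter, ← Finset.sum_add_distrib]
    refine Finset.sum_congr rfl fun q hq => ?_
    by_cases h1 : cp a q <;> by_cases h2 : cp q a
    · exact absurd (lt_trans h1.1 h2.1) (lt_irrefl _)
    all_goals simp [h1, h2]
  omega

lemma crossings_erase {a : Fin n × Fin n} {μ : Finset (Fin n × Fin n)} (ha : a ∈ μ) :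
    crossings μ = crossings (μ.erase a) + crossNum a (μ.erase a) := by
  conv_lhs => rw [← Finset.insert_erase ha]
  exact crossings_insert (Finset.notMem_erase a μ)

lemma arc_parity {i j b d : Fin n} (hbd : b < d)
    (h1 : b ≠ i) (h2 : b ≠ j) (h3 : d ≠ i) (h4 : d ≠ j) :
    (({b, d} : Finset (Fin n)) ∩ Finset.Ioo i j).card % 2
      = (if cp (i, j) (b, d) ∨ cp (b, d) (i, j) then 1 else 0) % 2 := by
  classical
  have hbd'' : b ≠ d := ne_of_lt hbd
  have hsplit : (({b, d} : Finset (Fin n)) ∩ Finset.Ioo i j)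
      = ({b, d} : Finset (Fin n)).filter (· ∈ Finset.Ioo i j) := by
    ext x; simp [Finset.mem_filter, and_comm]
  have hioo : ∀ x : Fin n, x ∈ Finset.Ioo i j ↔ ((i : ℕ) < x ∧ (x : ℕ) < j) := by
    intro x; rw [Finset.mem_Ioo]; exact Iff.rfl
  have hbd' : (b : ℕ) < d := hbd
  have h1' : (b : ℕ) ≠ i := Fin.val_ne_iff.2 h1
  have h2' : (b : ℕ) ≠ j := Fin.val_ne_iff.2 h2
  have h3' : (d : ℕ) ≠ i := Fin.val_ne_iff.2 h3
  have h4' : (d : ℕ) ≠ j := Fin.val_ne_iff.2 h4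
  have hcc : (cp (i, j) (b, d) ∨ cp (b, d) (i, j)) ↔
      (((i:ℕ) < b ∧ (b:ℕ) < j ∧ (j:ℕ) < d) ∨ ((b:ℕ) < i ∧ (i:ℕ) < d ∧ (d:ℕ) < j)) := by
    constructor
    · rintro (⟨x, y, z⟩ | ⟨x, y, z⟩)
      · exact Or.inl ⟨x, y, z⟩
      · exact Or.inr ⟨x, y, z⟩
    · rintro (⟨x, y, z⟩ | ⟨x, y, z⟩)
      · exact Or.inl ⟨x, y, z⟩
      · exact Or.inr ⟨x, y, z⟩
  have hcard : (({b, d} : Finset (Fin n)) ∩ Finset.Ioo i j).card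
      = (if (i:ℕ) < b ∧ (b:ℕ) < j then 1 else 0) + (if (i:ℕ) < d ∧ (d:ℕ) < j then 1 else 0) := by
    rw [hsplit, Finset.filter_insert, Finset.filter_singleton]
    by_cases hb : b ∈ Finset.Ioo i j <;> by_cases hd : d ∈ Finset.Ioo i j
    · rw [if_pos hb, if_pos hd, Finset.card_insert_of_notMem (by simp [hbd'']),
        Finset.card_singleton, if_pos ((hioo b).1 hb), if_pos ((hioo d).1 hd)]
    · rw [if_pos hb, if_neg hd, Finset.card_insert_of_notMem (by simp),
        Finset.card_empty, if_pos ((hioo b).1 hb), if_neg (fun hx => hd ((hioo d).2 hx))]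
    · rw [if_neg hb, if_pos hd, Finset.card_singleton,
        if_neg (fun hx => hb ((hioo b).2 hx)), if_pos ((hioo d).1 hd)]
    · rw [if_neg hb, if_neg hd, Finset.card_empty,
        if_neg (fun hx => hb ((hioo b).2 hx)), if_neg (fun hx => hd ((hioo d).2 hx))]
  rw [hcard, if_congr hcc rfl rfl]
  split_ifs <;> omega

lemma crossNum_mod_two {a : Fin n × Fin n} {μ : Finset (Fin n × Fin n)} (h : IsMatching μ)
    (h1 : a.1 ∉ cover μ) (h2 : a.2 ∉ cover μ) :
    crossNum a μ % 2 = (cover μ ∩ Finset.Ioo a.1 a.2).card % 2 := by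
  classical
  have hsplit : cover μ ∩ Finset.Ioo a.1 a.2
      = μ.biUnion (fun q => ({q.1, q.2} : Finset (Fin n)) ∩ Finset.Ioo a.1 a.2) := by
    ext v
    simp only [Finset.mem_inter, mem_cover, Finset.mem_biUnion, Finset.mem_insert,
      Finset.mem_singleton]
    constructor
    · rintro ⟨⟨p, hp, hv⟩, hI⟩; exact ⟨p, hp, hv, hI⟩
    · rintro ⟨p, hp, hv, hI⟩; exact ⟨⟨p, hp, hv⟩, hI⟩
  have hdisj : ∀ p ∈ μ, ∀ q ∈ μ, p ≠ q →
      Disjoint (({p.1, p.2} : Finset (Fin n)) ∩ Finset.Ioo a.1 a.2)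
        (({q.1, q.2} : Finset (Fin n)) ∩ Finset.Ioo a.1 a.2) := by
    intro p hp q hq hne
    have := h.2 p hp q hq hne
    refine Disjoint.mono Finset.inter_subset_left Finset.inter_subset_left ?_
    rw [Finset.disjoint_iff_inter_eq_empty]
    exact this
  rw [hsplit, Finset.card_biUnion hdisj, crossNum, Finset.card_filter,
    Finset.sum_nat_mod]
  conv_rhs => rw [Finset.sum_nat_mod]
  congr 1
  refine Finset.sum_congr rfl fun q hq => ?_
  have hbd : q.1 < q.2 := h.1 q hq
  have hb1 : q.1 ≠ a.1 := fun he => h1 (mem_cover.2 ⟨q, hq, Or.inl he.symm⟩)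
  have hb2 : q.1 ≠ a.2 := fun he => h2 (mem_cover.2 ⟨q, hq, Or.inl he.symm⟩)
  have hd1 : q.2 ≠ a.1 := fun he => h1 (mem_cover.2 ⟨q, hq, Or.inr he.symm⟩)
  have hd2 : q.2 ≠ a.2 := fun he => h2 (mem_cover.2 ⟨q, hq, Or.inr he.symm⟩)
  exact (arc_parity hbd hb1 hb2 hd1 hd2).symm

lemma posSum_univ (Y : Finset (Fin n)) : posSum Finset.univ Y = ∑ y ∈ Y, ((y : ℕ) + 1) := by
  unfold posSum
  refine Finset.sum_congr rfl fun y _ => ?_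
  have : (Finset.univ.filter fun z => z ≤ y) = Finset.Iic y := by
    ext z; simp
  rw [this, Fin.card_Iic]

lemma mpf_empty {R : Type*} [CommRing R] (A : Matrix (Fin n) (Fin n) R) :
    mpf A (∅ : Finset (Fin n)) = 1 := by
  classical
  unfold mpf
  have : (Finset.univ.filter
      (fun μ : Finset (Fin n × Fin n) => IsMatching μ ∧ cover μ = ∅)) = {∅} := by
    ext μ
    simp only [Finset.mem_filter, Finset.mem_univ, true_and, Finset.mem_singleton]
    constructor
    · rintro ⟨-, hc⟩; exact cover_eq_empty hc
    · rintro rfl; exact ⟨matching_empty, cover_empty⟩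
  rw [this, Finset.sum_singleton, crossings_empty, Finset.prod_empty]
  ring

section Move

variable {A₀ B X : Finset (Fin n)} {μ₁ μ₂ : Finset (Fin n × Fin n)} {a : Fin n × Fin n}

lemma cover_disj (hd : Disjoint A₀ B) (hX : X ⊆ B) :
    Disjoint (A₀ ∪ X) (B \ X) := by
  rw [Finset.disjoint_union_left]
  exact ⟨hd.mono_right Finset.sdiff_subset, Finset.disjoint_sdiff⟩

variable (hd : Disjoint A₀ B) (hu : A₀ ∪ B = Finset.univ) (hX : X ⊆ B)
  (hm1 : IsMatching μ₁) (hc1 : cover μ₁ = A₀ ∪ X)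
  (hm2 : IsMatching μ₂) (hc2 : cover μ₂ = B \ X)

section ArcInMu2
variable (ha : a ∈ μ₂)

include hd hX hm1 hc1 hm2 hc2 ha

lemma ha1_mem : a.1 ∈ B \ X := by
  rw [← hc2]; exact mem_cover.2 ⟨a, ha, Or.inl rfl⟩

lemma ha2_mem : a.2 ∈ B \ X := by
  rw [← hc2]; exact mem_cover.2 ⟨a, ha, Or.inr rfl⟩

lemma a_notmem_mu1 : a ∉ μ₁ := by
  intro hmem
  have h1 : a.1 ∈ cover μ₁ := mem_cover.2 ⟨a, hmem, Or.inl rfl⟩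
  rw [hc1] at h1
  exact (Finset.disjoint_left.1 (cover_disj hd hX)) h1 (ha1_mem hd hX hm1 hc1 hm2 hc2 ha)

lemma a1_notmem_cov1 : a.1 ∉ cover μ₁ := by
  rw [hc1]
  exact fun h => (Finset.disjoint_left.1 (cover_disj hd hX)) h (ha1_mem hd hX hm1 hc1 hm2 hc2 ha)

lemma a2_notmem_cov1 : a.2 ∉ cover μ₁ := by
  rw [hc1]
  exact fun h => (Finset.disjoint_left.1 (cover_disj hd hX)) h (ha2_mem hd hX hm1 hc1 hm2 hc2 ha)

lemma sdiff_union_pair : B \ (X ∪ {a.1, a.2}) = (B \ X) \ {a.1, a.2} := by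
  ext x; simp only [Finset.mem_sdiff, Finset.mem_union, Finset.mem_insert, Finset.mem_singleton]
  tauto

lemma move_struct :
    IsMatching (insert a μ₁) ∧ cover (insert a μ₁) = A₀ ∪ (X ∪ {a.1, a.2}) ∧
    IsMatching (μ₂.erase a) ∧ cover (μ₂.erase a) = B \ (X ∪ {a.1, a.2}) ∧
    X ∪ {a.1, a.2} ⊆ B := by
  have hlt : a.1 < a.2 := hm2.1 a ha
  have h1 := ha1_mem hd hX hm1 hc1 hm2 hc2 ha
  have h2 := ha2_mem hd hX hm1 hc1 hm2 hc2 ha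
  refine ⟨matching_insert hm1 hlt (a1_notmem_cov1 hd hX hm1 hc1 hm2 hc2 ha)
    (a2_notmem_cov1 hd hX hm1 hc1 hm2 hc2 ha), ?_, matching_subset (Finset.erase_subset a μ₂) hm2, ?_, ?_⟩
  · rw [cover_insert, hc1]
    ext x
    simp only [Finset.mem_insert, Finset.mem_union, Finset.mem_singleton]
    tauto
  · rw [cover_erase hm2 ha, hc2, sdiff_union_pair hd hX hm1 hc1 hm2 hc2 ha]
  · rw [Finset.union_subset_iff]
    refine ⟨hX, ?_⟩
    intro x hx
    rcases Finset.mem_insert.1 hx with rfl | hx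
    · exact (Finset.mem_sdiff.1 h1).1
    · rw [Finset.mem_singleton.1 hx]
      exact (Finset.mem_sdiff.1 h2).1

include hu

lemma move_parity :
    Odd (posSum Finset.univ (B \ (X ∪ {a.1, a.2})) + crossings (insert a μ₁)
      + crossings (μ₂.erase a)
      + (posSum Finset.univ (B \ X) + crossings μ₁ + crossings μ₂)) := by
  classical
  have hlt : a.1 < a.2 := hm2.1 a ha
  have hne : a.1 ≠ a.2 := ne_of_lt hlt
  have h1 := ha1_mem hd hX hm1 hc1 hm2 hc2 ha
  have h2 := ha2_mem hd hX hm1 hc1 hm2 hc2 ha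
  have hnm1 := a_notmem_mu1 hd hX hm1 hc1 hm2 hc2 ha
  have e1 : crossings (insert a μ₁) = crossings μ₁ + crossNum a μ₁ := crossings_insert hnm1
  have e2 : crossings μ₂ = crossings (μ₂.erase a) + crossNum a (μ₂.erase a) := crossings_erase ha
  -- posSum decomposition
  have hpair_sub : ({a.1, a.2} : Finset (Fin n)) ⊆ B \ X := by
    intro x hx
    rcases Finset.mem_insert.1 hx with rfl | hx
    · exact h1
    · rw [Finset.mem_singleton.1 hx]; exact h2
  have e3 : posSum Finset.univ (B \ X)
      = posSum Finset.univ (B \ (X ∪ {a.1, a.2})) + (((a.1 : ℕ) + 1) + ((a.2 : ℕ) + 1)) := by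
    rw [posSum_univ, posSum_univ, sdiff_union_pair hd hX hm1 hc1 hm2 hc2 ha,
      ← Finset.sum_sdiff hpair_sub, Finset.sum_pair hne]
  -- crossNum parities
  have hcovE : cover (μ₂.erase a) = (B \ X) \ {a.1, a.2} := by
    rw [cover_erase hm2 ha, hc2]
  have e4 : crossNum a μ₁ % 2 = (cover μ₁ ∩ Finset.Ioo a.1 a.2).card % 2 :=
    crossNum_mod_two hm1 (a1_notmem_cov1 hd hX hm1 hc1 hm2 hc2 ha)
      (a2_notmem_cov1 hd hX hm1 hc1 hm2 hc2 ha)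
  have e5 : crossNum a (μ₂.erase a) % 2
      = (cover (μ₂.erase a) ∩ Finset.Ioo a.1 a.2).card % 2 := by
    refine crossNum_mod_two (matching_subset (Finset.erase_subset a μ₂) hm2) ?_ ?_
    · rw [hcovE]; simp
    · rw [hcovE]; simp
  -- the two covers are disjoint and their union misses exactly a.1, a.2
  have hdisj2 : Disjoint (cover μ₁ ∩ Finset.Ioo a.1 a.2)
      (cover (μ₂.erase a) ∩ Finset.Ioo a.1 a.2) := by
    refine Disjoint.mono Finset.inter_subset_left Finset.inter_subset_left ?_
    rw [hc1, hcovE]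
    exact (cover_disj hd hX).mono_right Finset.sdiff_subset
  have hunion2 : (cover μ₁ ∩ Finset.Ioo a.1 a.2) ∪ (cover (μ₂.erase a) ∩ Finset.Ioo a.1 a.2)
      = Finset.Ioo a.1 a.2 := by
    rw [hc1, hcovE, ← Finset.union_inter_distrib_right]
    ext x
    simp only [Finset.mem_inter, Finset.mem_union, Finset.mem_sdiff, Finset.mem_insert,
      Finset.mem_singleton, Finset.mem_Ioo]
    constructor
    · rintro ⟨-, hx⟩; exact hx
    · rintro hx
      refine ⟨?_, hx⟩
      have hxu : x ∈ A₀ ∪ B := by rw [hu]; exact Finset.mem_univ x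
      have hx1 : x ≠ a.1 := fun he => absurd hx.1 (by rw [he]; exact lt_irrefl _)
      have hx2 : x ≠ a.2 := fun he => absurd hx.2 (by rw [he]; exact lt_irrefl _)
      rcases Finset.mem_union.1 hxu with hxa | hxb
      · exact Or.inl (Or.inl hxa)
      · by_cases hxX : x ∈ X
        · exact Or.inl (Or.inr hxX)
        · exact Or.inr ⟨⟨hxb, hxX⟩, fun h => h.elim hx1 hx2⟩
  have e6 : (cover μ₁ ∩ Finset.Ioo a.1 a.2).card
      + (cover (μ₂.erase a) ∩ Finset.Ioo a.1 a.2).card = (a.2 : ℕ) - a.1 - 1 := by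
    rw [← Finset.card_union_of_disjoint hdisj2, hunion2, Fin.card_Ioo]
  have hlt' : (a.1 : ℕ) < a.2 := hlt
  rw [Nat.odd_iff]
  omega

end ArcInMu2

section ArcInMu1
variable (ha : a ∈ μ₁) (hab1 : a.1 ∈ B) (hab2 : a.2 ∈ B)

include hd hX hm1 hc1 hm2 hc2 ha hab1 hab2

lemma erase_struct :
    IsMatching (μ₁.erase a) ∧ cover (μ₁.erase a) = A₀ ∪ (X \ {a.1, a.2}) ∧
    IsMatching (insert a μ₂) ∧ cover (insert a μ₂) = B \ (X \ {a.1, a.2}) ∧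
    (X \ {a.1, a.2}) ⊆ B ∧ a.1 ∈ X ∧ a.2 ∈ X ∧ a ∉ μ₂ ∧
    a ∈ insert a μ₂ ∧ (X \ {a.1, a.2}) ∪ {a.1, a.2} = X ∧
    insert a (μ₁.erase a) = μ₁ ∧ (insert a μ₂).erase a = μ₂ := by
  have hlt : a.1 < a.2 := hm1.1 a ha
  have hca1 : a.1 ∈ cover μ₁ := mem_cover.2 ⟨a, ha, Or.inl rfl⟩
  have hca2 : a.2 ∈ cover μ₁ := mem_cover.2 ⟨a, ha, Or.inr rfl⟩
  rw [hc1] at hca1 hca2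
  have ha1X : a.1 ∈ X := by
    rcases Finset.mem_union.1 hca1 with h | h
    · exact absurd hab1 (Finset.disjoint_left.1 hd h)
    · exact h
  have ha2X : a.2 ∈ X := by
    rcases Finset.mem_union.1 hca2 with h | h
    · exact absurd hab2 (Finset.disjoint_left.1 hd h)
    · exact h
  have hanm2 : a ∉ μ₂ := by
    intro hmem
    have : a.1 ∈ cover μ₂ := mem_cover.2 ⟨a, hmem, Or.inl rfl⟩
    rw [hc2] at this
    exact (Finset.mem_sdiff.1 this).2 ha1X
  have hc2a1 : a.1 ∉ cover μ₂ := by rw [hc2]; simp [ha1X]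
  have hc2a2 : a.2 ∉ cover μ₂ := by rw [hc2]; simp [ha2X]
  have ha1A : a.1 ∉ A₀ := fun h => Finset.disjoint_left.1 hd h hab1
  have ha2A : a.2 ∉ A₀ := fun h => Finset.disjoint_left.1 hd h hab2
  refine ⟨matching_subset (Finset.erase_subset a μ₁) hm1, ?_,
    matching_insert hm2 hlt hc2a1 hc2a2, ?_, ?_, ha1X, ha2X, hanm2,
    Finset.mem_insert_self a μ₂, ?_, Finset.insert_erase ha, Finset.erase_insert hanm2⟩
  · rw [cover_erase hm1 ha, hc1]
    ext x
    simp only [Finset.mem_sdiff, Finset.mem_union, Finset.mem_insert, Finset.mem_singleton]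
    constructor
    · rintro ⟨h | h, hn⟩
      · exact Or.inl h
      · exact Or.inr ⟨h, hn⟩
    · rintro (h | ⟨h, hn⟩)
      · refine ⟨Or.inl h, ?_⟩
        rintro (rfl | rfl) <;> [exact ha1A h; exact ha2A h]
      · exact ⟨Or.inr h, hn⟩
  · rw [cover_insert, hc2]
    ext x
    simp only [Finset.mem_insert, Finset.mem_sdiff, Finset.mem_singleton]
    constructor
    · rintro (rfl | rfl | ⟨hb, hn⟩)
      · exact ⟨hab1, by simp⟩
      · exact ⟨hab2, by simp⟩
      · exact ⟨hb, fun h => hn h.1⟩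
    · rintro ⟨hb, hn⟩
      push_neg at hn
      by_cases hxX : x ∈ X
      · exact (hn hxX).elim Or.inl (fun h => Or.inr (Or.inl h))
      · exact Or.inr (Or.inr ⟨hb, hxX⟩)
  · exact fun x hx => hX (Finset.mem_sdiff.1 hx).1
  · ext x
    simp only [Finset.mem_union, Finset.mem_sdiff, Finset.mem_insert, Finset.mem_singleton]
    constructor
    · rintro (⟨h, -⟩ | rfl | rfl) <;> [exact h; exact ha1X; exact ha2X]
    · intro h
      by_cases h1 : x = a.1
      · exact Or.inr (Or.inl h1)
      · by_cases h2 : x = a.2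
        · exact Or.inr (Or.inr h2)
        · exact Or.inl ⟨h, fun hx => hx.elim h1 h2⟩

end ArcInMu1

end Move

lemma choose_congr {α : Type*} {S1 S2 : Finset α} (h : S1 = S2)
    (h1 : S1.Nonempty) (h2 : S2.Nonempty) : Exists.choose h1 = Exists.choose h2 := by
  subst h; rfl

lemma neg_one_pow_add_eq_zero {R : Type*} [CommRing R] {m m' : ℕ} (h : Odd (m + m')) (c : R) :
    (-1 : R) ^ m * c + (-1 : R) ^ m' * c = 0 := by
  have h2 := Nat.odd_iff.1 h
  by_cases hm : m % 2 = 0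
  · rw [(Nat.even_iff.2 hm).neg_one_pow, (Nat.odd_iff.2 (by omega)).neg_one_pow]; ring
  · rw [(Nat.odd_iff.2 (by omega)).neg_one_pow, (Nat.even_iff.2 (by omega)).neg_one_pow]; ring

lemma mpf_semiBip {R : Type*} [CommRing R] (A : Matrix (Fin n) (Fin n) R) (B : Finset (Fin n)) :
    mpf (semiBip A B) Finset.univ
      = ∑ μ ∈ Finset.univ.filter (fun μ : Finset (Fin n × Fin n) =>
          (IsMatching μ ∧ cover μ = Finset.univ) ∧
            μ.filter (fun p => p.1 ∈ B ∧ p.2 ∈ B) = ∅),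
          (-1 : R) ^ crossings μ * ∏ p ∈ μ, A p.1 p.2 := by
  classical
  unfold mpf
  rw [Finset.sum_filter, Finset.sum_filter]
  refine Finset.sum_congr rfl fun μ _ => ?_
  by_cases hmc : IsMatching μ ∧ cover μ = Finset.univ
  · by_cases hbb : μ.filter (fun p => p.1 ∈ B ∧ p.2 ∈ B) = ∅
    · rw [if_pos hmc, if_pos ⟨hmc, hbb⟩]
      congr 1
      refine Finset.prod_congr rfl fun p hp => ?_
      have : ¬ (p.1 ∈ B ∧ p.2 ∈ B) := by
        intro hc
        have : p ∈ μ.filter (fun p => p.1 ∈ B ∧ p.2 ∈ B) := Finset.mem_filter.2 ⟨hp, hc⟩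
        rw [hbb] at this
        exact Finset.notMem_empty p this
      simp [semiBip, this]
    · rw [if_pos hmc, if_neg (fun hc => hbb hc.2)]
      obtain ⟨p, hp⟩ := Finset.nonempty_iff_ne_empty.2 hbb
      have hpμ := (Finset.mem_filter.1 hp).1
      have hpB := (Finset.mem_filter.1 hp).2
      have : semiBip A B p.1 p.2 = 0 := by simp [semiBip, hpB]
      rw [Finset.prod_eq_zero hpμ this, mul_zero]
  · rw [if_neg hmc, if_neg (fun hc => hmc hc.1)]


lemma flatten {R : Type*} [CommRing R] (A : Matrix (Fin n) (Fin n) R) (A₀ B : Finset (Fin n)) :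
    ∑ X ∈ B.powerset, (-1 : R) ^ posSum Finset.univ (B \ X) * (mpf A (A₀ ∪ X) * mpf A (B \ X))
      = ∑ t ∈ (Finset.univ : Finset
            (Finset (Fin n) × Finset (Fin n × Fin n) × Finset (Fin n × Fin n))).filter
          (fun t => t.1 ⊆ B ∧ (IsMatching t.2.1 ∧ cover t.2.1 = A₀ ∪ t.1) ∧
            (IsMatching t.2.2 ∧ cover t.2.2 = B \ t.1)),
          (-1 : R) ^ (posSum Finset.univ (B \ t.1) + crossings t.2.1 + crossings t.2.2) *
            ((∏ p ∈ t.2.1, A p.1 p.2) * ∏ p ∈ t.2.2, A p.1 p.2) := by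
  classical
  rw [Finset.sum_filter, ← Finset.univ_product_univ, Finset.sum_product]
  have hpow : B.powerset = Finset.univ.filter (· ⊆ B) := by
    ext X; simp [Finset.mem_powerset]
  rw [hpow, Finset.sum_filter]
  refine Finset.sum_congr rfl fun X _ => ?_
  rw [← Finset.univ_product_univ, Finset.sum_product]
  by_cases hXB : X ⊆ B
  · rw [if_pos hXB]
    unfold mpf
    rw [Finset.sum_mul_sum, Finset.mul_sum, Finset.sum_filter]
    refine Finset.sum_congr rfl fun μ₁ _ => ?_
    by_cases h1 : IsMatching μ₁ ∧ cover μ₁ = A₀ ∪ X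
    · rw [if_pos h1, Finset.mul_sum, Finset.sum_filter]
      refine Finset.sum_congr rfl fun μ₂ _ => ?_
      by_cases h2 : IsMatching μ₂ ∧ cover μ₂ = B \ X
      · rw [if_pos h2, if_pos ⟨hXB, h1, h2⟩, pow_add, pow_add]
        ring
      · rw [if_neg h2, if_neg (fun hc => h2 hc.2.2)]
    · rw [if_neg h1]
      refine (Finset.sum_eq_zero fun μ₂ _ => ?_).symm
      rw [if_neg (fun hc => h1 hc.2.1)]
  · rw [if_neg hXB]
    refine (Finset.sum_eq_zero fun μ₁ _ => Finset.sum_eq_zero fun μ₂ _ => ?_).symm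
    rw [if_neg (fun hc => hXB hc.1)]

abbrev Tri (n : ℕ) := Finset (Fin n) × Finset (Fin n × Fin n) × Finset (Fin n × Fin n)

noncomputable def pickA {α : Type*} {T : Finset α} (h : T.Nonempty) : α := Exists.choose h

lemma pickA_mem {α : Type*} {T : Finset α} (h : T.Nonempty) : pickA h ∈ T := Exists.choose_spec h

lemma pickA_congr {α : Type*} {S1 S2 : Finset α} (hS : S1 = S2) (h1 : S1.Nonempty)
    (h2 : S2.Nonempty) : pickA h1 = pickA h2 := by subst hS; rfl

def Tof (B : Finset (Fin n)) (t : Tri n) : Finset (Fin n × Fin n) :=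
  t.2.1.filter (fun p => p.1 ∈ B ∧ p.2 ∈ B) ∪ t.2.2

noncomputable def gfun (B : Finset (Fin n)) (t : Tri n) : Tri n :=
  if h : (Tof B t).Nonempty then
    (if pickA h ∈ t.2.2 then
      (t.1 ∪ {(pickA h).1, (pickA h).2}, insert (pickA h) t.2.1, t.2.2.erase (pickA h))
     else
      (t.1 \ {(pickA h).1, (pickA h).2}, t.2.1.erase (pickA h), insert (pickA h) t.2.2))
  else t

def condT (A₀ B : Finset (Fin n)) (t : Tri n) : Prop :=
  t.1 ⊆ B ∧ (IsMatching t.2.1 ∧ cover t.2.1 = A₀ ∪ t.1) ∧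
    (IsMatching t.2.2 ∧ cover t.2.2 = B \ t.1)

noncomputable def wfun {R : Type*} [CommRing R] (A : Matrix (Fin n) (Fin n) R)
    (B : Finset (Fin n)) (t : Tri n) : R :=
  (-1 : R) ^ (posSum Finset.univ (B \ t.1) + crossings t.2.1 + crossings t.2.2) *
    ((∏ p ∈ t.2.1, A p.1 p.2) * ∏ p ∈ t.2.2, A p.1 p.2)

lemma key {R : Type*} [CommRing R] (A : Matrix (Fin n) (Fin n) R) {A₀ B : Finset (Fin n)}
    (hd : Disjoint A₀ B) (hu : A₀ ∪ B = Finset.univ) (t : Tri n)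
    (hcond : condT A₀ B t) (hne : Tof B t ≠ ∅) :
    condT A₀ B (gfun B t) ∧ Tof B (gfun B t) = Tof B t ∧ gfun B (gfun B t) = t ∧
      (wfun A B t + wfun A B (gfun B t) = 0) ∧ gfun B t ≠ t := by
  obtain ⟨X, μ₁, μ₂⟩ := t
  obtain ⟨hX, ⟨hm1, hc1⟩, hm2, hc2⟩ := hcond
  simp only at hX hm1 hc1 hm2 hc2
  have hT : (Tof B (X, μ₁, μ₂)).Nonempty := Finset.nonempty_iff_ne_empty.2 hne
  set a := pickA hT with ha_def
  have haT : a ∈ Tof B (X, μ₁, μ₂) := pickA_mem hT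
  rcases Finset.mem_union.1 haT with haF | ha2
  case inr =>
    -- a is an arc of μ₂
    have hstruct := move_struct hd hX hm1 hc1 hm2 hc2 ha2
    obtain ⟨hm1', hc1', hm2', hc2', hX'⟩ := hstruct
    have hnotm1 : a ∉ μ₁ := a_notmem_mu1 hd hX hm1 hc1 hm2 hc2 ha2
    have ha1B : a.1 ∈ B := (Finset.mem_sdiff.1 (ha1_mem hd hX hm1 hc1 hm2 hc2 ha2)).1
    have ha2B : a.2 ∈ B := (Finset.mem_sdiff.1 (ha2_mem hd hX hm1 hc1 hm2 hc2 ha2)).1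
    have ha1X : a.1 ∉ X := (Finset.mem_sdiff.1 (ha1_mem hd hX hm1 hc1 hm2 hc2 ha2)).2
    have ha2X : a.2 ∉ X := (Finset.mem_sdiff.1 (ha2_mem hd hX hm1 hc1 hm2 hc2 ha2)).2
    have hg : gfun B (X, μ₁, μ₂)
        = (X ∪ {a.1, a.2}, insert a μ₁, μ₂.erase a) := by
      unfold gfun
      rw [dif_pos hT, if_pos ha2]
    have hTeq : Tof B (X ∪ {a.1, a.2}, insert a μ₁, μ₂.erase a) = Tof B (X, μ₁, μ₂) := by
      unfold Tof
      rw [Finset.filter_insert, if_pos ⟨ha1B, ha2B⟩, Finset.insert_union,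
        ← Finset.union_insert, Finset.insert_erase ha2]
    have hcond' : condT A₀ B (X ∪ {a.1, a.2}, insert a μ₁, μ₂.erase a) :=
      ⟨hX', ⟨hm1', hc1'⟩, hm2', hc2'⟩
    have hT' : (Tof B (X ∪ {a.1, a.2}, insert a μ₁, μ₂.erase a)).Nonempty := by
      rw [hTeq]; exact hT
    have hback : gfun B (X ∪ {a.1, a.2}, insert a μ₁, μ₂.erase a) = (X, μ₁, μ₂) := by
      unfold gfun
      rw [dif_pos hT']
      have hpe : pickA hT' = a := pickA_congr hTeq hT' hT
      rw [hpe, if_neg (Finset.notMem_erase a μ₂)]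
      have h1 : (X ∪ {a.1, a.2}) \ {a.1, a.2} = X := by
        ext x
        simp only [Finset.mem_sdiff, Finset.mem_union, Finset.mem_insert, Finset.mem_singleton]
        constructor
        · rintro ⟨h | h, hn⟩
          · exact h
          · exact absurd h hn
        · intro hx
          refine ⟨Or.inl hx, ?_⟩
          rintro (rfl | rfl) <;> [exact ha1X hx; exact ha2X hx]
      rw [h1, Finset.erase_insert hnotm1, Finset.insert_erase ha2]
    have hprod : ((∏ p ∈ insert a μ₁, A p.1 p.2) * ∏ p ∈ μ₂.erase a, A p.1 p.2)
        = (∏ p ∈ μ₁, A p.1 p.2) * ∏ p ∈ μ₂, A p.1 p.2 := by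
      rw [Finset.prod_insert hnotm1, ← Finset.mul_prod_erase _ _ ha2]
      ring
    have hodd := move_parity hd hu hX hm1 hc1 hm2 hc2 ha2
    refine ⟨hg ▸ hcond', hg ▸ hTeq, by rw [hg, hback], ?_, ?_⟩
    · rw [hg]
      unfold wfun
      dsimp only
      rw [hprod]
      refine neg_one_pow_add_eq_zero ?_ _
      rw [Nat.odd_iff] at hodd ⊢
      omega
    · rw [hg]
      intro hcontra
      have h22 := congrArg (fun t : Tri n => t.2.2) hcontra
      simp only [Finset.erase_eq_self] at h22
      exact h22 ha2
  case inl =>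
    have ha1 : a ∈ μ₁ := (Finset.mem_filter.1 haF).1
    have ha1B : a.1 ∈ B := (Finset.mem_filter.1 haF).2.1
    have ha2B : a.2 ∈ B := (Finset.mem_filter.1 haF).2.2
    have hstruct := erase_struct hd hX hm1 hc1 hm2 hc2 ha1 ha1B ha2B
    obtain ⟨hm1', hc1', hm2', hc2', hX', ha1X, ha2X, hanm2, hamem', hXrec, hrec1, hrec2⟩ := hstruct
    have hg : gfun B (X, μ₁, μ₂)
        = (X \ {a.1, a.2}, μ₁.erase a, insert a μ₂) := by
      unfold gfun
      rw [dif_pos hT, if_neg hanm2]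
    have haFmem : a ∈ μ₁.filter (fun p => p.1 ∈ B ∧ p.2 ∈ B) := haF
    have hTeq : Tof B (X \ {a.1, a.2}, μ₁.erase a, insert a μ₂) = Tof B (X, μ₁, μ₂) := by
      unfold Tof
      rw [Finset.filter_erase, Finset.union_insert, ← Finset.insert_union,
        Finset.insert_erase haFmem]
    have hcond' : condT A₀ B (X \ {a.1, a.2}, μ₁.erase a, insert a μ₂) :=
      ⟨hX', ⟨hm1', hc1'⟩, hm2', hc2'⟩
    have hT' : (Tof B (X \ {a.1, a.2}, μ₁.erase a, insert a μ₂)).Nonempty := by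
      rw [hTeq]; exact hT
    have hback : gfun B (X \ {a.1, a.2}, μ₁.erase a, insert a μ₂) = (X, μ₁, μ₂) := by
      unfold gfun
      rw [dif_pos hT']
      have hpe : pickA hT' = a := pickA_congr hTeq hT' hT
      rw [hpe, if_pos (Finset.mem_insert_self a μ₂)]
      rw [hXrec, hrec1, hrec2]
    have hprod : ((∏ p ∈ μ₁.erase a, A p.1 p.2) * ∏ p ∈ insert a μ₂, A p.1 p.2)
        = (∏ p ∈ μ₁, A p.1 p.2) * ∏ p ∈ μ₂, A p.1 p.2 := by
      rw [Finset.prod_insert hanm2, ← Finset.mul_prod_erase _ _ ha1]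
      ring
    have hodd := move_parity hd hu hX' hm1' hc1' hm2' hc2' (Finset.mem_insert_self a μ₂)
    rw [hXrec, hrec1, hrec2] at hodd
    refine ⟨hg ▸ hcond', hg ▸ hTeq, by rw [hg, hback], ?_, ?_⟩
    · rw [hg]
      unfold wfun
      dsimp only
      rw [hprod]
      refine neg_one_pow_add_eq_zero ?_ _
      rw [Nat.odd_iff] at hodd ⊢
      omega
    · rw [hg]
      intro hcontra
      have h22 := congrArg (fun t : Tri n => t.2.2) hcontra
      simp only [Finset.insert_eq_self] at h22
      exact hanm2 h22

/-- **Srinivasan's expansion, case `m = n`.** With `V` ordered of even size `2n`,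
partitioned into disjoint `A₀` and `B` of equal size:
`Pf(V) = Pf(A₀,B) − ∑_{X ⊊ B} (−1)^{Σ(B\X,V)} Pf(A₀ ∪ X) Pf(B \ X)`,
where `Pf(A₀,B)` is the Pfaffian of the semi-bipartite matrix. -/
theorem srinivasan_m_eq_n {N : ℕ} {R : Type*} [CommRing R]
    (A : Matrix (Fin N) (Fin N) R) (hA : ∀ i j, A i j = - A j i)
    (A₀ B : Finset (Fin N)) (hdisj : Disjoint A₀ B) (hunion : A₀ ∪ B = Finset.univ)
    (hcard : A₀.card = B.card) :
    mpf A Finset.univ =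
      mpf (semiBip A B) Finset.univ -
        ∑ X ∈ B.powerset.filter (fun X => X ≠ B),
          (-1 : R) ^ posSum Finset.univ (B \ X) * (mpf A (A₀ ∪ X) * mpf A (B \ X)) := by
  classical
  have hstar : ∑ X ∈ B.powerset,
      (-1 : R) ^ posSum Finset.univ (B \ X) * (mpf A (A₀ ∪ X) * mpf A (B \ X))
      = mpf (semiBip A B) Finset.univ := by
    rw [flatten A A₀ B, mpf_semiBip A B]
    have hfilters : (Finset.univ : Finset (Tri N)).filter
        (fun t => t.1 ⊆ B ∧ (IsMatching t.2.1 ∧ cover t.2.1 = A₀ ∪ t.1) ∧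
          (IsMatching t.2.2 ∧ cover t.2.2 = B \ t.1))
        = (Finset.univ : Finset (Tri N)).filter (condT A₀ B) := by
      ext t
      simp only [Finset.mem_filter]
      exact and_congr_right fun _ => Iff.rfl
    have hL : ∑ t ∈ (Finset.univ : Finset (Tri N)).filter
        (fun t => t.1 ⊆ B ∧ (IsMatching t.2.1 ∧ cover t.2.1 = A₀ ∪ t.1) ∧
          (IsMatching t.2.2 ∧ cover t.2.2 = B \ t.1)),
        (-1 : R) ^ (posSum Finset.univ (B \ t.1) + crossings t.2.1 + crossings t.2.2) *
          ((∏ p ∈ t.2.1, A p.1 p.2) * ∏ p ∈ t.2.2, A p.1 p.2)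
        = ∑ t ∈ (Finset.univ : Finset (Tri N)).filter (condT A₀ B), wfun A B t := by
      rw [hfilters]
      rfl
    rw [hL, ← Finset.sum_filter_add_sum_filter_not
      ((Finset.univ : Finset (Tri N)).filter (condT A₀ B)) (fun t => Tof B t = ∅) (wfun A B)]
    have hbad : ∑ t ∈ ((Finset.univ : Finset (Tri N)).filter (condT A₀ B)).filter
        (fun t => ¬ Tof B t = ∅), wfun A B t = 0 := by
      have hkey : ∀ t ∈ ((Finset.univ : Finset (Tri N)).filter (condT A₀ B)).filter
          (fun t => ¬ Tof B t = ∅),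
          condT A₀ B (gfun B t) ∧ Tof B (gfun B t) = Tof B t ∧ gfun B (gfun B t) = t ∧
            (wfun A B t + wfun A B (gfun B t) = 0) ∧ gfun B t ≠ t := by
        intro t ht
        obtain ⟨ht1, ht2⟩ := Finset.mem_filter.1 ht
        exact key A hdisj hunion t (Finset.mem_filter.1 ht1).2 ht2
      refine Finset.sum_involution (fun t _ => gfun B t) ?_ ?_ ?_ ?_
      · intro t ht; exact (hkey t ht).2.2.2.1
      · intro t ht _; exact (hkey t ht).2.2.2.2
      · intro t ht
        refine Finset.mem_filter.2 ⟨Finset.mem_filter.2 ⟨Finset.mem_univ _, (hkey t ht).1⟩, ?_⟩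
        show ¬ Tof B (gfun B t) = ∅
        rw [(hkey t ht).2.1]
        exact (Finset.mem_filter.1 ht).2
      · intro t ht; exact (hkey t ht).2.2.1
    rw [hbad, add_zero]
    refine Finset.sum_nbij' (fun t => t.2.1) (fun μ => (B, μ, (∅ : Finset (Fin N × Fin N))))
      ?_ ?_ ?_ ?_ ?_
    · intro t ht
      obtain ⟨ht1, ht2⟩ := Finset.mem_filter.1 ht
      obtain ⟨hX, ⟨hm1, hc1⟩, hm2, hc2⟩ := (Finset.mem_filter.1 ht1).2
      have hTof := Finset.union_eq_empty.1 ht2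
      have h22 : t.2.2 = ∅ := hTof.2
      have hcov2 : cover t.2.2 = ∅ := by rw [h22]; exact cover_empty
      have hBX : B \ t.1 = ∅ := by rw [← hc2, hcov2]
      have ht1B : t.1 = B := Finset.Subset.antisymm hX (Finset.sdiff_eq_empty_iff_subset.1 hBX)
      refine Finset.mem_filter.2 ⟨Finset.mem_univ _, ⟨hm1, ?_⟩, hTof.1⟩
      rw [hc1, ht1B, hunion]
    · intro μ hμ
      obtain ⟨-, ⟨hm, hc⟩, hbb⟩ := Finset.mem_filter.1 hμ
      refine Finset.mem_filter.2 ⟨Finset.mem_filter.2 ⟨Finset.mem_univ _, ?_⟩, ?_⟩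
      · exact ⟨Finset.Subset.refl B, ⟨hm, by rw [hc, ← hunion]⟩,
          matching_empty, by rw [cover_empty, Finset.sdiff_self]⟩
      · show Tof B (B, μ, (∅ : Finset (Fin N × Fin N))) = ∅
        unfold Tof
        rw [Finset.union_empty]
        exact hbb
    · intro t ht
      obtain ⟨ht1, ht2⟩ := Finset.mem_filter.1 ht
      obtain ⟨hX, ⟨hm1, hc1⟩, hm2, hc2⟩ := (Finset.mem_filter.1 ht1).2
      have hTof := Finset.union_eq_empty.1 ht2
      have h22 : t.2.2 = ∅ := hTof.2
      have hcov2 : cover t.2.2 = ∅ := by rw [h22]; exact cover_empty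
      have hBX : B \ t.1 = ∅ := by rw [← hc2, hcov2]
      have ht1B : t.1 = B := Finset.Subset.antisymm hX (Finset.sdiff_eq_empty_iff_subset.1 hBX)
      exact Prod.ext ht1B.symm (Prod.ext rfl h22.symm)
    · intro μ _; rfl
    · intro t ht
      obtain ⟨ht1, ht2⟩ := Finset.mem_filter.1 ht
      obtain ⟨hX, ⟨hm1, hc1⟩, hm2, hc2⟩ := (Finset.mem_filter.1 ht1).2
      have hTof := Finset.union_eq_empty.1 ht2
      have h22 : t.2.2 = ∅ := hTof.2
      have hcov2 : cover t.2.2 = ∅ := by rw [h22]; exact cover_empty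
      have hBX : B \ t.1 = ∅ := by rw [← hc2, hcov2]
      have ht1B : t.1 = B := Finset.Subset.antisymm hX (Finset.sdiff_eq_empty_iff_subset.1 hBX)
      unfold wfun
      rw [ht1B, Finset.sdiff_self, h22, crossings_empty, Finset.prod_empty, mul_one, add_zero]
      have hps : posSum (Finset.univ : Finset (Fin N)) (∅ : Finset (Fin N)) = 0 := by
        unfold posSum
        exact Finset.sum_empty
      rw [hps, zero_add]
  -- now derive the goal
  have hsplit := Finset.sum_filter_add_sum_filter_not B.powerset (fun X => X = B)
    (fun X => (-1 : R) ^ posSum Finset.univ (B \ X) * (mpf A (A₀ ∪ X) * mpf A (B \ X)))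
  have hfB : B.powerset.filter (fun X => X = B) = {B} := by
    ext X
    simp only [Finset.mem_filter, Finset.mem_powerset, Finset.mem_singleton]
    constructor
    · rintro ⟨-, h⟩; exact h
    · rintro rfl; exact ⟨Finset.Subset.refl _, rfl⟩
  have hterm : ∑ X ∈ B.powerset.filter (fun X => X = B),
      (-1 : R) ^ posSum Finset.univ (B \ X) * (mpf A (A₀ ∪ X) * mpf A (B \ X))
      = mpf A Finset.univ := by
    rw [hfB, Finset.sum_singleton, Finset.sdiff_self]
    have hps : posSum (Finset.univ : Finset (Fin N)) (∅ : Finset (Fin N)) = 0 :=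
      Finset.sum_empty
    rw [hps, pow_zero, one_mul, mpf_empty, mul_one, hunion]
  have hnotB : B.powerset.filter (fun X => ¬ X = B) = B.powerset.filter (fun X => X ≠ B) := rfl
  rw [hterm, hnotB] at hsplit
  rw [← hstar, ← hsplit]
  ring
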